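/- Let P be a transition matrix of a finite irreducible Markov chain, let t(ε) denote its ε-mixing time and let t_L(ε) denote the ε-mixing time of the lazy version (I+P)/2. Let X^L be the lazy chain realized as X at an independent Binomial(t, 1/2) number of steps. Then for every ε ∈ (0,1) and every C with P(|Bin(t,1/2) − t/2| ≥ C√t) ≤ ε², the worst-case hitting-time quantities p(α, s) = max_x max_{A : π(A) > α} P_x(τ_A > s) satisfy p(1/2, t/2 + C√t) ≤ p^L(1/2, t)/(1 − ε²) and p(1/2, t/2 − C√t) ≥ p^L(1/2, t) − ε². -/
import Mathlib


open Finset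

/-- `t`-step transition probabilities of the chain with transition matrix `P`. -/
def matPow {S : Type*} [Fintype S] [DecidableEq S] (P : S → S → ℝ) : ℕ → S → S → ℝ
  | 0 => fun x y => if x = y then 1 else 0
  | t + 1 => fun x y => ∑ z, matPow P t x z * P z y

/-- Transition matrix killed upon landing in `A`. -/
def killed {S : Type*} [DecidableEq S] (P : S → S → ℝ) (A : Finset S) (x y : S) : ℝ :=
  if y ∈ A then 0 else P x y

/-- Survival probability `P_x(τ_A > s)`. -/
def survival {S : Type*} [Fintype S] [DecidableEq S]
    (P : S → S → ℝ) (A : Finset S) (s : ℕ) (x : S) : ℝ :=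
  if x ∈ A then 0 else ∑ y, matPow (killed P A) s x y

/-- Worst-case hitting quantity `p(α, s) = max_x max_{A : π(A) > α} P_x(τ_A > s)`. -/
noncomputable def hitQuant {S : Type*} [Fintype S] [DecidableEq S]
    (P : S → S → ℝ) (π : S → ℝ) (α : ℝ) (s : ℕ) : ℝ :=
  sSup {r : ℝ | ∃ (x : S) (A : Finset S), α < ∑ a ∈ A, π a ∧ r = survival P A s x}

/-- The lazy version `(I + P)/2` of a transition matrix. -/
noncomputable def lazify {S : Type*} [DecidableEq S] (P : S → S → ℝ) (x y : S) : ℝ :=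
  (if x = y then (1 : ℝ) else 0) / 2 + P x y / 2

section Aux
set_option linter.unusedSectionVars false
variable {S : Type*} [Fintype S] [DecidableEq S]


lemma matPow_nonneg {P : S → S → ℝ} (h : ∀ x y, 0 ≤ P x y) (t : ℕ) (x y : S) :
    0 ≤ matPow P t x y := by
  induction t generalizing x y with
  | zero => simp only [matPow]; positivity
  | succ t ih =>
    simp only [matPow]
    exact Finset.sum_nonneg fun z _ => mul_nonneg (ih x z) (h z y)

lemma killed_nonneg {P : S → S → ℝ} (h : ∀ x y, 0 ≤ P x y) (A : Finset S) (x y : S) :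
    0 ≤ killed P A x y := by
  unfold killed; split <;> [rfl; exact h x y]

lemma killed_rowsum_le {P : S → S → ℝ} (h0 : ∀ x y, 0 ≤ P x y) (h1 : ∀ x, ∑ y, P x y = 1)
    (A : Finset S) (x : S) : ∑ y, killed P A x y ≤ 1 := by
  calc ∑ y, killed P A x y ≤ ∑ y, P x y := by
        apply Finset.sum_le_sum
        intro y _
        unfold killed; split
        · exact h0 x y
        · exact le_rfl
    _ = 1 := h1 x

lemma matPow_rowsum_succ_le {Q : S → S → ℝ} (h0 : ∀ x y, 0 ≤ Q x y)
    (h1 : ∀ x, ∑ y, Q x y ≤ 1) (t : ℕ) (x : S) :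
    ∑ y, matPow Q (t + 1) x y ≤ ∑ y, matPow Q t x y := by
  simp only [matPow]
  rw [Finset.sum_comm]
  apply Finset.sum_le_sum
  intro z _
  rw [← Finset.mul_sum]
  calc matPow Q t x z * ∑ y, Q z y ≤ matPow Q t x z * 1 :=
        mul_le_mul_of_nonneg_left (h1 z) (matPow_nonneg h0 t x z)
    _ = matPow Q t x z := mul_one _

lemma matPow_rowsum_anti {Q : S → S → ℝ} (h0 : ∀ x y, 0 ≤ Q x y)
    (h1 : ∀ x, ∑ y, Q x y ≤ 1) {u v : ℕ} (huv : u ≤ v) (x : S) :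
    ∑ y, matPow Q v x y ≤ ∑ y, matPow Q u x y := by
  induction v, huv using Nat.le_induction with
  | base => exact le_rfl
  | succ v hv ih => exact le_trans (matPow_rowsum_succ_le h0 h1 v x) ih

lemma matPow_rowsum_le_one {Q : S → S → ℝ} (h0 : ∀ x y, 0 ≤ Q x y)
    (h1 : ∀ x, ∑ y, Q x y ≤ 1) (t : ℕ) (x : S) :
    ∑ y, matPow Q t x y ≤ 1 := by
  have := matPow_rowsum_anti h0 h1 (Nat.zero_le t) x
  simp only [matPow] at this
  simpa using this

lemma survival_nonneg {P : S → S → ℝ} (h : ∀ x y, 0 ≤ P x y) (A : Finset S) (s : ℕ) (x : S) :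
    0 ≤ survival P A s x := by
  unfold survival; split
  · rfl
  · exact Finset.sum_nonneg fun y _ => matPow_nonneg (killed_nonneg h A) s x y

lemma survival_le_one {P : S → S → ℝ} (h0 : ∀ x y, 0 ≤ P x y) (h1 : ∀ x, ∑ y, P x y = 1)
    (A : Finset S) (s : ℕ) (x : S) : survival P A s x ≤ 1 := by
  unfold survival; split
  · norm_num
  · exact matPow_rowsum_le_one (killed_nonneg h0 A) (killed_rowsum_le h0 h1 A) s x

lemma survival_anti {P : S → S → ℝ} (h0 : ∀ x y, 0 ≤ P x y) (h1 : ∀ x, ∑ y, P x y = 1)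
    (A : Finset S) {u v : ℕ} (huv : u ≤ v) (x : S) :
    survival P A v x ≤ survival P A u x := by
  unfold survival; split
  · exact le_rfl
  · exact matPow_rowsum_anti (killed_nonneg h0 A) (killed_rowsum_le h0 h1 A) huv x

lemma matPow_killed_eq_zero {P : S → S → ℝ} {A : Finset S} {x z : S} (hx : x ∉ A)
    (hz : z ∈ A) : ∀ u : ℕ, matPow (killed P A) u x z = 0
  | 0 => by
    simp only [matPow]
    exact if_neg (fun h => hx (by rw [h]; exact hz))
  | u + 1 => by
    simp only [matPow]
    apply Finset.sum_eq_zero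
    intro w _
    have : killed P A w z = 0 := if_pos hz
    rw [this, mul_zero]
lemma pascal_sum (f : ℕ → ℝ) (t : ℕ) :
    ∑ u ∈ range (t+1), (t.choose u : ℝ) * (f u + f (u+1))
      = ∑ u ∈ range (t+2), ((t+1).choose u : ℝ) * f u := by
  have h2 : ∑ u ∈ range (t+1), (t.choose u : ℝ) * f u
      = ∑ i ∈ range (t+1), (t.choose (i+1) : ℝ) * f (i+1) + f 0 := by
    rw [Finset.sum_range_succ (fun i => (t.choose (i+1) : ℝ) * f (i+1)) t]
    simp only [Nat.choose_succ_self, Nat.cast_zero, zero_mul, add_zero]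
    rw [Finset.sum_range_succ' (fun u => (t.choose u : ℝ) * f u) t]
    simp
  rw [Finset.sum_range_succ' (fun u => ((t+1).choose u : ℝ) * f u) (t+1)]
  simp only [Nat.choose_succ_succ, Nat.cast_add, Nat.choose_zero_right, Nat.cast_one, one_mul,
    add_mul]
  rw [Finset.sum_add_distrib]
  have h1 : ∑ u ∈ range (t+1), (t.choose u : ℝ) * (f u + f (u+1))
      = ∑ u ∈ range (t+1), (t.choose u : ℝ) * f u
        + ∑ u ∈ range (t+1), (t.choose u : ℝ) * f (u+1) := by
    rw [← Finset.sum_add_distrib]; exact Finset.sum_congr rfl fun u _ => by ring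
  rw [h1, h2]; ring

lemma half_step {P : S → S → ℝ} {A : Finset S} {x : S} (hx : x ∉ A) (u : ℕ) (y : S) :
    ∑ z, matPow (killed P A) u x z * killed (lazify P) A z y
      = (matPow (killed P A) u x y + matPow (killed P A) (u+1) x y) / 2 := by
  have key : ∀ z, matPow (killed P A) u x z * killed (lazify P) A z y
      = matPow (killed P A) u x z * (((if z = y then (1:ℝ) else 0) + killed P A z y) / 2) := by
    intro z
    by_cases hz : z ∈ A
    · rw [matPow_killed_eq_zero hx hz u, zero_mul, zero_mul]
    · congr 1
      unfold killed lazify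
      by_cases hy : y ∈ A
      · simp only [if_pos hy]
        have hzy : z ≠ y := fun h => hz (by rw [h]; exact hy)
        simp [hzy]
      · simp only [if_neg hy]
        ring
  rw [Finset.sum_congr rfl fun z _ => key z]
  calc ∑ z, matPow (killed P A) u x z * (((if z = y then (1:ℝ) else 0) + killed P A z y) / 2)
      = (∑ z, (matPow (killed P A) u x z * (if z = y then (1:ℝ) else 0)
          + matPow (killed P A) u x z * killed P A z y)) / 2 := by
        rw [Finset.sum_div]
        exact Finset.sum_congr rfl fun z _ => by ring
    _ = ((∑ z, matPow (killed P A) u x z * (if z = y then (1:ℝ) else 0))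
          + ∑ z, matPow (killed P A) u x z * killed P A z y) / 2 := by
        rw [Finset.sum_add_distrib]
    _ = (matPow (killed P A) u x y + matPow (killed P A) (u+1) x y) / 2 := by
        have hd : (∑ z, matPow (killed P A) u x z * (if z = y then (1:ℝ) else 0))
            = matPow (killed P A) u x y := by simp [mul_ite]
        have hK : (∑ z, matPow (killed P A) u x z * killed P A z y)
            = matPow (killed P A) (u+1) x y := rfl
        rw [hd, hK]

lemma lazy_matPow {P : S → S → ℝ} (A : Finset S) :
    ∀ (t : ℕ) (x y : S), x ∉ A →
    matPow (killed (lazify P) A) t x y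
      = ∑ u ∈ range (t+1), (t.choose u : ℝ) / 2 ^ t * matPow (killed P A) u x y := by
  intro t
  induction t with
  | zero => intro x y hx; simp [matPow]
  | succ t ih =>
    intro x y hx
    have step1 : matPow (killed (lazify P) A) (t+1) x y
        = ∑ z, (∑ u ∈ range (t+1), (t.choose u : ℝ)/2^t * matPow (killed P A) u x z)
            * killed (lazify P) A z y := by
      simp only [matPow]
      exact Finset.sum_congr rfl fun z _ => by rw [ih x z hx]
    rw [step1]
    simp_rw [Finset.sum_mul]
    rw [Finset.sum_comm]
    have step2 : ∀ u ∈ range (t+1),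
        (∑ z, (t.choose u : ℝ)/2^t * matPow (killed P A) u x z * killed (lazify P) A z y)
        = (t.choose u : ℝ)/2^t
            * ((matPow (killed P A) u x y + matPow (killed P A) (u+1) x y)/2) := by
      intro u _
      simp_rw [mul_assoc]
      rw [← Finset.mul_sum, half_step hx u y]
    rw [Finset.sum_congr rfl step2]
    have h2 : ∀ u, (t.choose u : ℝ)/2^t
        * ((matPow (killed P A) u x y + matPow (killed P A) (u+1) x y)/2)
        = (t.choose u : ℝ)
            * (matPow (killed P A) u x y + matPow (killed P A) (u+1) x y) / 2^(t+1) := by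
      intro u; rw [pow_succ]; ring
    simp_rw [h2]
    rw [← Finset.sum_div, pascal_sum (fun u => matPow (killed P A) u x y) t, Finset.sum_div]
    exact Finset.sum_congr rfl fun u _ => by ring


lemma lazy_survival {P : S → S → ℝ} (A : Finset S) (t : ℕ) (x : S) :
    survival (lazify P) A t x
      = ∑ u ∈ range (t+1), (t.choose u : ℝ) / 2 ^ t * survival P A u x := by
  unfold survival
  by_cases hx : x ∈ A
  · simp [hx]
  · simp only [if_neg hx]
    rw [Finset.sum_congr rfl fun y (_ : y ∈ univ) => lazy_matPow A t x y hx]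
    rw [Finset.sum_comm]
    exact Finset.sum_congr rfl fun u _ => by rw [Finset.mul_sum]

end Aux

/-- comparison of worst-case hitting quantities of a chain and of its
lazy version. For every `ε` and every `C` such that
`P(|Bin(t,1/2) − t/2| ≥ C√t) ≤ ε²`, one has
`p(1/2, t/2 + C√t) ≤ p^L(1/2, t)/(1 − ε²)` and
`p(1/2, t/2 − C√t) ≥ p^L(1/2, t) − ε²`. -/
theorem lazy_hitting_comparison
    {S : Type*} [Fintype S] [DecidableEq S]
    (P : S → S → ℝ) (π : S → ℝ)
    (hP0 : ∀ x y, 0 ≤ P x y) (hP1 : ∀ x, ∑ y, P x y = 1)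
    (hirr : ∀ x y, ∃ t : ℕ, 0 < matPow P t x y)
    (hπ0 : ∀ x, 0 ≤ π x) (hπ1 : ∑ x, π x = 1)
    (hstat : ∀ y, ∑ x, π x * P x y = π y)
    (t : ℕ) (ε C : ℝ) (hε : 0 < ε) (hε1 : ε < 1) (hCpos : 0 < C)
    (hbin : ∑ u ∈ (Finset.range (t + 1)).filter
        (fun u : ℕ => C * Real.sqrt t ≤ |(u : ℝ) - (t : ℝ) / 2|),
        (Nat.choose t u : ℝ) / 2 ^ t ≤ ε ^ 2) :
    hitQuant P π (1 / 2) ⌈(t : ℝ) / 2 + C * Real.sqrt t⌉₊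
        ≤ hitQuant (lazify P) π (1 / 2) t / (1 - ε ^ 2) ∧
    hitQuant P π (1 / 2) ⌊(t : ℝ) / 2 - C * Real.sqrt t⌋₊
        ≥ hitQuant (lazify P) π (1 / 2) t - ε ^ 2 := by
  have hε2 : ε ^ 2 < 1 := by nlinarith
  have h1ε : 0 < 1 - ε ^ 2 := by linarith
  have hS : Nonempty S := by
    by_contra h
    rw [not_nonempty_iff] at h
    rw [Finset.univ_eq_empty, Finset.sum_empty] at hπ1
    norm_num at hπ1
  obtain ⟨x₀⟩ := hS
  -- lazify properties
  have hL0 : ∀ x y, 0 ≤ lazify P x y := by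
    intro x y
    unfold lazify
    apply add_nonneg
    · split <;> norm_num
    · exact div_nonneg (hP0 x y) (by norm_num)
  have hL1 : ∀ x, ∑ y, lazify P x y = 1 := by
    intro x
    unfold lazify
    rw [Finset.sum_add_distrib, ← Finset.sum_div, ← Finset.sum_div, hP1]
    simp
    norm_num
  -- weights
  set w : ℕ → ℝ := fun u => (t.choose u : ℝ) / 2 ^ t with hw
  have hw0 : ∀ u, 0 ≤ w u := fun u => by positivity
  have hwsum : ∑ u ∈ Finset.range (t+1), w u = 1 := by
    rw [← Finset.sum_div, div_eq_one_iff_eq (by positivity)]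
    rw [← Nat.cast_sum, Nat.sum_range_choose]
    push_cast; ring
  set bad := (Finset.range (t+1)).filter
      (fun u : ℕ => C * Real.sqrt t ≤ |(u : ℝ) - (t : ℝ) / 2|) with hbadd
  set good := (Finset.range (t+1)).filter
      (fun u : ℕ => ¬ (C * Real.sqrt t ≤ |(u : ℝ) - (t : ℝ) / 2|)) with hgoodd
  have hsplit : ∑ u ∈ bad, w u + ∑ u ∈ good, w u = 1 := by
    rw [hbadd, hgoodd, Finset.sum_filter_add_sum_filter_not, hwsum]
  have hbad_le : ∑ u ∈ bad, w u ≤ ε ^ 2 := hbin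
  have hbad_nn : 0 ≤ ∑ u ∈ bad, w u := Finset.sum_nonneg fun u _ => hw0 u
  have hgood_ge : 1 - ε ^ 2 ≤ ∑ u ∈ good, w u := by linarith
  have hgood_le : ∑ u ∈ good, w u ≤ 1 := by linarith
  -- membership helpers
  have hbdd : ∀ (Q : S → S → ℝ), (∀ x y, 0 ≤ Q x y) → (∀ x, ∑ y, Q x y = 1) → ∀ s : ℕ,
      BddAbove {r : ℝ | ∃ (x : S) (A : Finset S), 1/2 < ∑ a ∈ A, π a ∧ r = survival Q A s x} := by
    intro Q hQ0 hQ1 s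
    refine ⟨1, ?_⟩
    rintro r ⟨x, A, hA, rfl⟩
    exact survival_le_one hQ0 hQ1 A s x
  have hmem0 : ∀ (Q : S → S → ℝ) (s : ℕ),
      (0 : ℝ) ∈ {r : ℝ | ∃ (x : S) (A : Finset S), 1/2 < ∑ a ∈ A, π a ∧ r = survival Q A s x} := by
    intro Q s
    refine ⟨x₀, Finset.univ, by rw [hπ1]; norm_num, ?_⟩
    unfold survival
    rw [if_pos (Finset.mem_univ x₀)]
  have hq_nn : ∀ (Q : S → S → ℝ), (∀ x y, 0 ≤ Q x y) → (∀ x, ∑ y, Q x y = 1) → ∀ s : ℕ,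
      0 ≤ hitQuant Q π (1/2) s := by
    intro Q hQ0 hQ1 s
    exact le_csSup (hbdd Q hQ0 hQ1 s) (hmem0 Q s)
  have hLq_nn := hq_nn (lazify P) hL0 hL1 t
  constructor
  · -- first inequality
    set sp := ⌈(t : ℝ) / 2 + C * Real.sqrt t⌉₊ with hsp
    apply Real.sSup_le
    · rintro r ⟨x, A, hA, rfl⟩
      rw [le_div_iff₀ h1ε]
      have hkey : survival P A sp x * (1 - ε ^ 2) ≤ survival (lazify P) A t x := by
        rw [lazy_survival A t x]
        have hdrop : ∑ u ∈ good, w u * survival P A u x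
            ≤ ∑ u ∈ Finset.range (t+1), w u * survival P A u x := by
          apply Finset.sum_le_sum_of_subset_of_nonneg (Finset.filter_subset _ _)
          intro u _ _
          exact mul_nonneg (hw0 u) (survival_nonneg hP0 A u x)
        have hterm : ∀ u ∈ good, w u * survival P A sp x ≤ w u * survival P A u x := by
          intro u hu
          rw [hgoodd, Finset.mem_filter] at hu
          have habs := not_le.mp hu.2
          have h1 : (u : ℝ) - (t : ℝ)/2 < C * Real.sqrt t := lt_of_le_of_lt (le_abs_self _) habs
          have h2 : (u : ℝ) < (t : ℝ)/2 + C * Real.sqrt t := by linarith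
          have h3 : (u : ℝ) < (sp : ℝ) := lt_of_lt_of_le h2 (Nat.le_ceil _)
          have h4 : u ≤ sp := le_of_lt (Nat.cast_lt.mp h3)
          exact mul_le_mul_of_nonneg_left (survival_anti hP0 hP1 A h4 x) (hw0 u)
        calc survival P A sp x * (1 - ε ^ 2)
            ≤ survival P A sp x * ∑ u ∈ good, w u :=
              mul_le_mul_of_nonneg_left hgood_ge (survival_nonneg hP0 A sp x)
          _ = ∑ u ∈ good, w u * survival P A sp x := by
              rw [Finset.mul_sum]
              exact Finset.sum_congr rfl fun u _ => mul_comm _ _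
          _ ≤ ∑ u ∈ good, w u * survival P A u x := Finset.sum_le_sum hterm
          _ ≤ ∑ u ∈ Finset.range (t+1), w u * survival P A u x := hdrop
      have hmem : survival (lazify P) A t x ≤ hitQuant (lazify P) π (1/2) t :=
        le_csSup (hbdd (lazify P) hL0 hL1 t) ⟨x, A, hA, rfl⟩
      linarith
    · exact div_nonneg hLq_nn h1ε.le
  · -- second inequality
    set sm := ⌊(t : ℝ) / 2 - C * Real.sqrt t⌋₊ with hsm
    have hPq_nn := hq_nn P hP0 hP1 sm
    have hmain : hitQuant (lazify P) π (1/2) t ≤ hitQuant P π (1/2) sm + ε ^ 2 := by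
      apply Real.sSup_le
      · rintro r ⟨x, A, hA, rfl⟩
        rw [lazy_survival A t x]
        have hsplit2 : ∑ u ∈ Finset.range (t+1), w u * survival P A u x
            = ∑ u ∈ bad, w u * survival P A u x + ∑ u ∈ good, w u * survival P A u x := by
          rw [hbadd, hgoodd, Finset.sum_filter_add_sum_filter_not]
        have hbad2 : ∑ u ∈ bad, w u * survival P A u x ≤ ε ^ 2 := by
          calc ∑ u ∈ bad, w u * survival P A u x ≤ ∑ u ∈ bad, w u := by
                apply Finset.sum_le_sum
                intro u _
                calc w u * survival P A u x ≤ w u * 1 :=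
                      mul_le_mul_of_nonneg_left (survival_le_one hP0 hP1 A u x) (hw0 u)
                  _ = w u := mul_one _
            _ ≤ ε ^ 2 := hbad_le
        have hgood2 : ∑ u ∈ good, w u * survival P A u x ≤ survival P A sm x := by
          have hterm : ∀ u ∈ good, w u * survival P A u x ≤ w u * survival P A sm x := by
            intro u hu
            rw [hgoodd, Finset.mem_filter] at hu
            have habs := not_le.mp hu.2
            have h1 : (t : ℝ)/2 - (u : ℝ) < C * Real.sqrt t := by
              have h := abs_lt.mp habs
              linarith [h.1]
            have hle : sm ≤ u := by
              rcases le_or_gt ((t : ℝ)/2 - C * Real.sqrt t) 0 with hn | hp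
              · rw [hsm, Nat.floor_of_nonpos hn]
                exact Nat.zero_le u
              · have hf : ((sm : ℕ) : ℝ) ≤ (t : ℝ)/2 - C * Real.sqrt t :=
                  Nat.floor_le hp.le
                have : ((sm : ℕ) : ℝ) < (u : ℝ) := by linarith
                exact le_of_lt (Nat.cast_lt.mp this)
            exact mul_le_mul_of_nonneg_left (survival_anti hP0 hP1 A hle x) (hw0 u)
          calc ∑ u ∈ good, w u * survival P A u x
              ≤ ∑ u ∈ good, w u * survival P A sm x := Finset.sum_le_sum hterm
            _ = (∑ u ∈ good, w u) * survival P A sm x := by rw [Finset.sum_mul]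
            _ ≤ 1 * survival P A sm x :=
                mul_le_mul_of_nonneg_right hgood_le (survival_nonneg hP0 A sm x)
            _ = survival P A sm x := one_mul _
        have hmem : survival P A sm x ≤ hitQuant P π (1/2) sm :=
          le_csSup (hbdd P hP0 hP1 sm) ⟨x, A, hA, rfl⟩
        linarith
      · positivity
    linarith
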